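/- There exists a unique s₀ > 0 such that ∫ π_1(sθ)π_0(sθ) Π(θ) dθ ≥ 1/6 holds iff s ≤ s₀, provided Π is a symmetric density around 0 with unbounded support and ∫ π_1(sθ)π_0(sθ) Π(θ)dθ → 0 as s → ∞; here π_1(x) = exp(Ax)/(1+exp(Ax)), π_0 = 1 − π_1, A > 0. -/
import Mathlib

open Real MeasureTheory Filter

noncomputable def p1 (A x : ℝ) : ℝ := Real.exp (A * x) / (1 + Real.exp (A * x))

noncomputable def p0 (A x : ℝ) : ℝ := 1 - p1 A x

lemma p1p0_eq (A x : ℝ) :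
    p1 A x * p0 A x = 1 / (2 * Real.cosh (A * x / 2)) ^ 2 := by
  have hu : Real.exp (A * x) = Real.exp (A * x / 2) ^ 2 := by
    rw [← Real.exp_nat_mul]; ring_nf
  have hu' : Real.exp (-(A * x / 2)) = 1 / Real.exp (A * x / 2) := by
    rw [Real.exp_neg]; ring
  have hpos : 0 < Real.exp (A * x / 2) := Real.exp_pos _
  have hpos' : 0 < 1 + Real.exp (A * x) := by positivity
  simp only [p1, p0, Real.cosh_eq, hu', hu]
  field_simp
  ring

lemma p1p0_le (A x : ℝ) : p1 A x * p0 A x ≤ 1 / 4 := by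
  rw [p1p0_eq]
  have h1 : (1 : ℝ) ≤ Real.cosh (A * x / 2) := Real.one_le_cosh _
  have h2 : (4 : ℝ) ≤ (2 * Real.cosh (A * x / 2)) ^ 2 := by nlinarith
  rw [div_le_div_iff₀ (by nlinarith) (by norm_num)]
  linarith

lemma p1p0_nonneg (A x : ℝ) : 0 ≤ p1 A x * p0 A x := by
  rw [p1p0_eq]; positivity

lemma p1p0_mono (A : ℝ) {x y : ℝ} (h : |x| ≤ |y|) :
    p1 A y * p0 A y ≤ p1 A x * p0 A x := by
  rw [p1p0_eq, p1p0_eq]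
  have hx1 : (1 : ℝ) ≤ Real.cosh (A * x / 2) := Real.one_le_cosh _
  have hc : Real.cosh (A * x / 2) ≤ Real.cosh (A * y / 2) := by
    rw [Real.cosh_le_cosh]
    rw [abs_div, abs_mul, abs_div, abs_mul]
    gcongr
  apply div_le_div_of_nonneg_left (by norm_num) (by nlinarith) (by nlinarith)

lemma p1p0_cont (A : ℝ) : Continuous fun x => p1 A x * p0 A x := by
  have : (fun x => p1 A x * p0 A x) = fun x => 1 / (2 * Real.cosh (A * x / 2)) ^ 2 := by
    funext x; exact p1p0_eq A x
  rw [this]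
  apply Continuous.div continuous_const
  · fun_prop
  · intro x
    have := Real.one_le_cosh (A * x / 2)
    positivity

/-- There is a unique threshold scale `s₀ > 0` such that
`∫ π₁(sθ)π₀(sθ) Π(θ) dθ ≥ 1/6` holds iff `s ≤ s₀`. -/
theorem unique_threshold_scale (A : ℝ) (hA : 0 < A) (w : ℝ → ℝ)
    (hmeas : Measurable w) (hnn : ∀ θ, 0 ≤ w θ) (hsym : ∀ θ, w (-θ) = w θ)
    (hprob : ∫ θ, w θ = 1)
    (hsupp : ∀ r : ℝ, ∃ θ : ℝ, r < |θ| ∧ 0 < w θ)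
    (hlim : Tendsto (fun s => ∫ θ, p1 A (s * θ) * p0 A (s * θ) * w θ) atTop (nhds 0)) :
    ∃! s₀ : ℝ, 0 < s₀ ∧ ∀ s, 0 < s →
      (1 / 6 ≤ ∫ θ, p1 A (s * θ) * p0 A (s * θ) * w θ ↔ s ≤ s₀) := by
  set F : ℝ → ℝ := fun s => ∫ θ, p1 A (s * θ) * p0 A (s * θ) * w θ with hF
  -- integrability of w
  have hw_int : Integrable w := by
    by_contra h
    rw [integral_undef h] at hprob
    norm_num at hprob
  -- measurability
  have hmeasF : ∀ s : ℝ, AEStronglyMeasurable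
      (fun θ => p1 A (s * θ) * p0 A (s * θ) * w θ) volume := by
    intro s
    exact ((((p1p0_cont A).comp (continuous_const.mul continuous_id)).measurable).mul
      hmeas).aestronglyMeasurable
  -- bound
  have hbound : ∀ s : ℝ, ∀ θ : ℝ, ‖p1 A (s * θ) * p0 A (s * θ) * w θ‖ ≤ w θ := by
    intro s θ
    rw [Real.norm_eq_abs, abs_of_nonneg (mul_nonneg (p1p0_nonneg A _) (hnn θ))]
    calc p1 A (s * θ) * p0 A (s * θ) * w θ ≤ (1/4) * w θ := by
          exact mul_le_mul_of_nonneg_right (p1p0_le A _) (hnn θ)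
      _ ≤ 1 * w θ := by nlinarith [hnn θ]
      _ = w θ := one_mul _
  -- integrability of integrands
  have hint : ∀ s : ℝ, Integrable (fun θ => p1 A (s * θ) * p0 A (s * θ) * w θ) := by
    intro s
    refine hw_int.mono (hmeasF s) ?_
    filter_upwards with θ
    rw [Real.norm_eq_abs (w θ), abs_of_nonneg (hnn θ)]
    exact hbound s θ
  -- continuity of F
  have hcont : Continuous F := by
    apply continuous_of_dominated hmeasF (fun s => Eventually.of_forall (hbound s)) hw_int
    filter_upwards with θ
    exact ((p1p0_cont A).comp (continuous_id.mul continuous_const)).mul continuous_const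
  -- F 0 = 1/4
  have hF0 : F 0 = 1 / 4 := by
    have : ∀ θ : ℝ, p1 A (0 * θ) * p0 A (0 * θ) * w θ = (1/4) * w θ := by
      intro θ
      rw [zero_mul, p1p0_eq]
      norm_num
    simp only [hF, this]
    rw [integral_const_mul, hprob]
    norm_num
  -- antitone on positives
  have hanti : ∀ s t : ℝ, 0 < s → s ≤ t → F t ≤ F s := by
    intro s t hs hst
    apply integral_mono (hint t) (hint s)
    intro θ
    apply mul_le_mul_of_nonneg_right _ (hnn θ)
    apply p1p0_mono
    rw [abs_mul, abs_mul]
    exact mul_le_mul_of_nonneg_right (by rw [abs_of_pos hs, abs_of_pos (lt_of_lt_of_le hs hst)]; exact hst) (abs_nonneg θ)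
  -- the set
  set T : Set ℝ := {s | 0 < s ∧ 1 / 6 ≤ F s} with hT
  -- nonempty
  have hTne : T.Nonempty := by
    have h1 : F ⁻¹' Set.Ioi (1/6 : ℝ) ∈ nhds (0 : ℝ) := by
      apply hcont.continuousAt.preimage_mem_nhds
      rw [hF0]
      exact Ioi_mem_nhds (by norm_num)
    rw [Metric.mem_nhds_iff] at h1
    obtain ⟨ε, hε, hball⟩ := h1
    refine ⟨ε / 2, by positivity, le_of_lt ?_⟩
    have : (ε / 2 : ℝ) ∈ Metric.ball (0 : ℝ) ε := by
      rw [Metric.mem_ball, dist_zero_right, Real.norm_eq_abs,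
        abs_of_pos (by positivity : (0:ℝ) < ε / 2)]
      linarith
    exact hball this
  -- bounded above
  have hTbdd : BddAbove T := by
    rw [tendsto_atTop_nhds] at hlim
    obtain ⟨S, hS⟩ := hlim (Set.Iio (1/6)) (by norm_num) isOpen_Iio
    refine ⟨S, fun s hs => ?_⟩
    by_contra h
    push_neg at h
    exact absurd hs.2 (not_le.mpr (hS s (le_of_lt h)))
  set s₀ := sSup T with hs₀
  have hs₀pos : 0 < s₀ := by
    obtain ⟨s, hs⟩ := hTne
    exact lt_of_lt_of_le hs.1 (le_csSup hTbdd hs)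
  -- below sup implies ≥ 1/6
  have hbelow : ∀ t : ℝ, 0 < t → t < s₀ → 1 / 6 ≤ F t := by
    intro t ht htlt
    obtain ⟨u, huT, htu⟩ := exists_lt_of_lt_csSup hTne htlt
    exact le_trans huT.2 (hanti t u ht (le_of_lt htu))
  have hiff : ∀ s, 0 < s → (1 / 6 ≤ F s ↔ s ≤ s₀) := by
    intro s hs
    constructor
    · intro h
      exact le_csSup hTbdd ⟨hs, h⟩
    · intro h
      rcases lt_or_eq_of_le h with h | h
      · exact hbelow s hs h
      · rw [h]
        have htend : Tendsto F (nhdsWithin s₀ (Set.Iio s₀)) (nhds (F s₀)) :=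
          hcont.continuousAt.mono_left nhdsWithin_le_nhds
        apply ge_of_tendsto htend
        filter_upwards [self_mem_nhdsWithin,
          ((eventually_gt_nhds hs₀pos).filter_mono nhdsWithin_le_nhds :
            ∀ᶠ t in nhdsWithin s₀ (Set.Iio s₀), 0 < t)] with t h1 h2
        exact hbelow t h2 h1
  refine ⟨s₀, ⟨hs₀pos, hiff⟩, ?_⟩
  rintro s₁ ⟨h1pos, h1⟩
  have ha : 1 / 6 ≤ F s₁ := (h1 s₁ h1pos).mpr le_rfl
  have hb : 1 / 6 ≤ F s₀ := (hiff s₀ hs₀pos).mpr le_rfl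
  exact le_antisymm ((hiff s₁ h1pos).mp ha) ((h1 s₀ hs₀pos).mp hb)
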